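/- arXiv:2301.08039 — 2 statements merged into one kernel-verified Lean document; each statement's English description precedes it below -/
import Mathlib

section
/- Let d ≥ 1, m > 0, and let u : ℝ^d → ℝ be differentiable with u ≥ 0 whose gradient h = ∇u satisfies ⟨h(x) − h(y), x − y⟩ ≥ 2m|x − y|² for all x, y ∈ ℝ^d. Then for every γ > 0 and every x ∈ ℝ^d, the tamed gradient satisfies ⟨h_{tam,γ}(x), x⟩ ≥ (m/2)|x|² − u(0). -/
/-!
Strong monotonicity of `∇u` gives, by integrating along the segment from `x` to `0`, the
first-order strong convexity bound `u x - ⟪∇u x, x⟫ + m ‖x‖² ≤ u 0`; with `u x ≥ 0` this yields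
`⟪∇u x - (m/2) x, x⟫ ≥ -u 0`. Taming only rescales `∇u x - (m/2) x` by a factor in `[0, 1]`,
which keeps that lower bound because `-u 0 ≤ 0`.
-/

open MeasureTheory Real

local notation "⟪" x ", " y "⟫" => @inner ℝ _ _ x y

/-- The taming of a vector field `h` with strong-convexity parameter `m` and
taming parameter `γ`: with `f x = h x − (m/2) x`, the tamed field is
`f x + (m/2) x` if `|f x| ≤ √γ` and `2 f x / (1 + γ^{-1/2} |f x|) + (m/2) x` otherwise. -/
noncomputable def htam {E : Type*} [NormedAddCommGroup E] [NormedSpace ℝ E]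
    (m γ : ℝ) (h : E → E) (x : E) : E :=
  (if ‖h x - (m / 2) • x‖ ≤ Real.sqrt γ then h x - (m / 2) • x
   else (2 / (1 + ‖h x - (m / 2) • x‖ / Real.sqrt γ)) • (h x - (m / 2) • x))
  + (m / 2) • x

section StrongConvexity

variable {E : Type*} [NormedAddCommGroup E] [InnerProductSpace ℝ E] [CompleteSpace E]
  {u : E → ℝ}

theorem hasDerivAt_comp_add_smul (hu : Differentiable ℝ u) (x v : E) (t : ℝ) :
    HasDerivAt (fun s : ℝ => u (x + s • v)) ⟪gradient u (x + t • v), v⟫ t := by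
  have hline : HasDerivAt (fun s : ℝ => x + s • v) v t := by
    simpa using ((hasDerivAt_id t).smul_const v).const_add x
  exact (hu _).hasGradientAt.hasFDerivAt.comp_hasDerivAt t hline

theorem add_inner_gradient_add_le_of_strongly_monotone (hu : Differentiable ℝ u) {μ : ℝ}
    (hmono : ∀ x y, μ * ‖x - y‖ ^ 2 ≤ ⟪gradient u x - gradient u y, x - y⟫) (x y : E) :
    u x + ⟪gradient u x, y - x⟫ + μ / 2 * ‖y - x‖ ^ 2 ≤ u y := by
  set v := y - x
  set φ : ℝ → ℝ := fun t => u (x + t • v) - t * ⟪gradient u x, v⟫ - μ / 2 * ‖v‖ ^ 2 * t ^ 2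
  have hφ : ∀ t, HasDerivAt φ
      (⟪gradient u (x + t • v), v⟫ - ⟪gradient u x, v⟫ - μ * ‖v‖ ^ 2 * t) t := by
    intro t
    have h := ((hasDerivAt_comp_add_smul hu x v t).sub
      ((hasDerivAt_id t).mul_const ⟪gradient u x, v⟫)).sub
      ((hasDerivAt_pow 2 t).const_mul (μ / 2 * ‖v‖ ^ 2))
    exact h.congr_deriv (by ring)
  have hφ'_nonneg : ∀ t ∈ Set.Ioo (0 : ℝ) 1,
      0 ≤ ⟪gradient u (x + t • v), v⟫ - ⟪gradient u x, v⟫ - μ * ‖v‖ ^ 2 * t := by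
    rintro t ⟨ht, -⟩
    have h := hmono (x + t • v) x
    rw [add_sub_cancel_left, norm_smul, real_inner_smul_right, inner_sub_left,
      Real.norm_of_nonneg ht.le] at h
    nlinarith
  have hmon : MonotoneOn φ (Set.Icc 0 1) := by
    refine monotoneOn_of_hasDerivWithinAt_nonneg (convex_Icc 0 1)
      (fun t _ => (hφ t).continuousAt.continuousWithinAt) (fun t _ => (hφ t).hasDerivWithinAt) ?_
    simpa only [interior_Icc] using hφ'_nonneg
  have h01 := hmon (by norm_num) (by norm_num) zero_le_one
  simp only [φ, zero_smul, add_zero, one_smul, v, add_sub_cancel] at h01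
  linarith

end StrongConvexity

theorem exists_mem_Icc_htam_eq {E : Type*} [NormedAddCommGroup E] [NormedSpace ℝ E]
    (m : ℝ) {γ : ℝ} (hγ : 0 < γ) (h : E → E) (x : E) :
    ∃ c ∈ Set.Icc (0 : ℝ) 1, htam m γ h x = c • (h x - (m / 2) • x) + (m / 2) • x := by
  unfold htam
  split_ifs with hsmall
  · exact ⟨1, ⟨zero_le_one, le_rfl⟩, by rw [one_smul]⟩
  · refine ⟨_, ⟨by positivity, ?_⟩, rfl⟩
    have hratio : 1 < ‖h x - (m / 2) • x‖ / √γ :=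
      (one_lt_div (Real.sqrt_pos.2 hγ)).2 (not_le.1 hsmall)
    rw [div_le_one (by linarith)]
    linarith

theorem le_inner_htam {E : Type*} [NormedAddCommGroup E] [InnerProductSpace ℝ E]
    (m : ℝ) {γ : ℝ} (hγ : 0 < γ) (h : E → E) (x : E) {a : ℝ} (ha : 0 ≤ a)
    (hfx : -a ≤ ⟪h x - (m / 2) • x, x⟫) :
    m / 2 * ‖x‖ ^ 2 - a ≤ ⟪htam m γ h x, x⟫ := by
  obtain ⟨c, ⟨hc0, hc1⟩, hc⟩ := exists_mem_Icc_htam_eq m hγ h x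
  rw [hc, inner_add_left, real_inner_smul_left, real_inner_smul_left, real_inner_self_eq_norm_sq]
  nlinarith [mul_nonneg hc0 (neg_le_iff_add_nonneg.1 hfx)]

theorem stmt_8_general (d : ℕ) (m : ℝ) (hm : 0 < m)
    (u : EuclideanSpace ℝ (Fin d) → ℝ) (hdiff : Differentiable ℝ u)
    (hnonneg : ∀ x, 0 ≤ u x)
    (hsc : ∀ x y : EuclideanSpace ℝ (Fin d),
      ⟪gradient u x - gradient u y, x - y⟫ ≥ 2 * m * ‖x - y‖ ^ 2) :
    ∀ γ : ℝ, 0 < γ → ∀ x : EuclideanSpace ℝ (Fin d),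
      ⟪htam m γ (gradient u) x, x⟫ ≥ m / 2 * ‖x‖ ^ 2 - u 0 := by
  intro γ hγ x
  have hconvex := add_inner_gradient_add_le_of_strongly_monotone hdiff hsc x 0
  rw [zero_sub, inner_neg_right, norm_neg] at hconvex
  refine le_inner_htam m hγ (gradient u) x (hnonneg 0) ?_
  rw [inner_sub_left, real_inner_smul_left, real_inner_self_eq_norm_sq]
  linarith [hnonneg x, mul_nonneg hm.le (sq_nonneg ‖x‖)]

theorem stmt_8 (d : ℕ) (hd : 1 ≤ d) (m : ℝ) (hm : 0 < m)
    (u : EuclideanSpace ℝ (Fin d) → ℝ) (hdiff : Differentiable ℝ u)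
    (hnonneg : ∀ x, 0 ≤ u x)
    (hsc : ∀ x y : EuclideanSpace ℝ (Fin d),
      ⟪gradient u x - gradient u y, x - y⟫ ≥ 2 * m * ‖x - y‖ ^ 2) :
    ∀ γ : ℝ, 0 < γ → ∀ x : EuclideanSpace ℝ (Fin d),
      ⟪htam m γ (gradient u) x, x⟫ ≥ m / 2 * ‖x‖ ^ 2 - u 0 :=
  stmt_8_general d m hm u hdiff hnonneg hsc
end

section
/- Let d ≥ 1, m > 0, let h : ℝ^d → ℝ^d be continuous, set f(x) = h(x) − (m/2)x, and let p > 0. Let X be an ℝ^d-valued random vector on a probability space (Ω, F, P) with E|f(X)|^{4p+4} < ∞. Then for every γ > 0, E|h_{tam,γ}(X) − h(X)|² ≤ (E|f(X)|^{4p+4})^{1/2} · γ^{−p}. -/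
/-! Write `f x = h x - (m/2) • x`. The taming error `htam - h` vanishes where `‖f‖ ≤ √γ`
and is `(c - 1) • f` with `c ∈ (0, 2]` elsewhere, so it is bounded by `‖f‖`; on that set
`γ < ‖f‖²`, whence `‖f‖² ≤ ‖f‖^(2p+2) γ^(-p)`. Taking expectations,
`E ‖f‖^(2p+2) ≤ (E ‖f‖^(4p+4))^(1/2)` by Cauchy–Schwarz (nonnegativity of the variance). -/

open MeasureTheory Real

lemma rpow_sq_eq_rpow_two_mul {a : ℝ} (ha : 0 ≤ a) (q : ℝ) : (a ^ q) ^ 2 = a ^ (2 * q) := by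
  rw [← Real.rpow_mul_natCast ha]; ring_nf

lemma sq_le_rpow_mul_rpow_neg {a γ p : ℝ} (hp : 0 ≤ p) (hγ : 0 < γ) (ha : √γ < a) :
    a ^ 2 ≤ a ^ (2 * p + 2) * γ ^ (-p) := by
  have ha₀ : 0 < a := (Real.sqrt_nonneg γ).trans_lt ha
  have hγa : γ < a ^ 2 := (Real.sqrt_lt' ha₀).1 ha
  have ha2 : 0 ≤ a ^ 2 := sq_nonneg a
  have hpow : (a ^ 2) ^ p = a ^ (2 * p) := by
    rw [← Real.rpow_natCast, ← Real.rpow_mul ha₀.le]; norm_num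
  calc a ^ 2 ≤ a ^ 2 * (a ^ 2 / γ) ^ p :=
        le_mul_of_one_le_right ha2 (Real.one_le_rpow ((one_le_div hγ).2 hγa.le) hp)
    _ = a ^ (2 * p + 2) * γ ^ (-p) := by
        rw [Real.div_rpow ha2 hγ.le, Real.rpow_neg hγ.le, hpow, Real.rpow_add ha₀,
          Real.rpow_two]
        ring

section NormedSpace

variable {E : Type*} [NormedAddCommGroup E] [NormedSpace ℝ E]

lemma norm_smul_sub_self_le {c : ℝ} (hc₀ : 0 ≤ c) (hc₂ : c ≤ 2) (y : E) :
    ‖c • y - y‖ ≤ ‖y‖ := by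
  rw [show c • y - y = (c - 1) • y by rw [sub_smul, one_smul], norm_smul, Real.norm_eq_abs]
  exact mul_le_of_le_one_left (norm_nonneg y) (abs_le.2 ⟨by linarith, by linarith⟩)

lemma htam_sub_self (m γ : ℝ) (h : E → E) (x : E) :
    htam m γ h x - h x =
      if ‖h x - (m / 2) • x‖ ≤ √γ then 0
      else (2 / (1 + ‖h x - (m / 2) • x‖ / √γ)) • (h x - (m / 2) • x)
        - (h x - (m / 2) • x) := by
  unfold htam
  split_ifs <;> abel

lemma norm_htam_sub_sq_le {m γ p : ℝ} (hγ : 0 < γ) (hp : 0 ≤ p) (h : E → E) (x : E) :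
    ‖htam m γ h x - h x‖ ^ 2 ≤ ‖h x - (m / 2) • x‖ ^ (2 * p + 2) * γ ^ (-p) := by
  rw [htam_sub_self]
  split_ifs with hle
  · rw [norm_zero, sq, zero_mul]; positivity
  · push Not at hle
    have hc₂ : 2 / (1 + ‖h x - (m / 2) • x‖ / √γ) ≤ 2 :=
      div_le_self zero_le_two (le_add_of_nonneg_right (by positivity))
    calc _ ≤ ‖h x - (m / 2) • x‖ ^ 2 :=
          pow_le_pow_left₀ (norm_nonneg _) (norm_smul_sub_self_le (by positivity) hc₂ _) 2
      _ ≤ _ := sq_le_rpow_mul_rpow_neg hp hγ hle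

end NormedSpace

section Moments

variable {Ω : Type*} [MeasurableSpace Ω] {μ : Measure Ω}

lemma integral_le_sqrt_integral_sq [IsProbabilityMeasure μ] {X : Ω → ℝ} (hX : MemLp X 2 μ) :
    ∫ ω, X ω ∂μ ≤ √(∫ ω, X ω ^ 2 ∂μ) := by
  have hsq : (∫ ω, X ω ∂μ) ^ 2 ≤ ∫ ω, X ω ^ 2 ∂μ := by
    have := ProbabilityTheory.variance_nonneg X μ
    rw [ProbabilityTheory.variance_eq_sub hX] at this
    simpa using this
  exact (le_abs_self _).trans (Real.abs_le_sqrt hsq)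

lemma memLp_two_rpow_of_integrable_rpow_two_mul {F : Ω → ℝ} (hF : ∀ ω, 0 ≤ F ω) {q : ℝ}
    (hint : Integrable (fun ω => F ω ^ (2 * q)) μ) : MemLp (fun ω => F ω ^ q) 2 μ := by
  have hroot : (fun ω => F ω ^ q) = fun ω => (F ω ^ (2 * q)) ^ ((1 : ℝ) / 2) := by
    ext ω; rw [← Real.rpow_mul (hF ω), show 2 * q * (1 / 2) = q by ring]
  have hmeas : AEStronglyMeasurable (fun ω => F ω ^ q) μ := by
    rw [hroot]
    exact (Real.continuous_rpow_const (by norm_num)).comp_aestronglyMeasurable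
      hint.aestronglyMeasurable
  exact (memLp_two_iff_integrable_sq hmeas).2
    (hint.congr (.of_forall fun ω => (rpow_sq_eq_rpow_two_mul (hF ω) q).symm))

lemma integral_rpow_le_sqrt_integral_rpow_two_mul [IsProbabilityMeasure μ] {F : Ω → ℝ}
    (hF : ∀ ω, 0 ≤ F ω) {q : ℝ} (hint : Integrable (fun ω => F ω ^ (2 * q)) μ) :
    ∫ ω, F ω ^ q ∂μ ≤ (∫ ω, F ω ^ (2 * q) ∂μ) ^ ((1 : ℝ) / 2) := by
  simpa only [rpow_sq_eq_rpow_two_mul (hF _), ← Real.sqrt_eq_rpow] using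
    integral_le_sqrt_integral_sq (memLp_two_rpow_of_integrable_rpow_two_mul hF hint)

end Moments

theorem stmt_10_general (d : ℕ) (m : ℝ)
    (h : EuclideanSpace ℝ (Fin d) → EuclideanSpace ℝ (Fin d))
    (p : ℝ) (hp : 0 < p)
    {Ω : Type*} [MeasurableSpace Ω] (P : Measure Ω) [IsProbabilityMeasure P]
    (X : Ω → EuclideanSpace ℝ (Fin d))
    (hmom : Integrable (fun ω => ‖h (X ω) - (m / 2) • X ω‖ ^ (4 * p + 4)) P) :
    ∀ γ : ℝ, 0 < γ →
      ∫ ω, ‖htam m γ h (X ω) - h (X ω)‖ ^ 2 ∂P ≤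
        (∫ ω, ‖h (X ω) - (m / 2) • X ω‖ ^ (4 * p + 4) ∂P) ^ ((1 : ℝ) / 2) * γ ^ (-p) := by
  intro γ hγ
  have hexp : 4 * p + 4 = 2 * (2 * p + 2) := by ring
  rw [hexp] at hmom ⊢
  have hG : Integrable (fun ω => ‖h (X ω) - (m / 2) • X ω‖ ^ (2 * p + 2)) P :=
    (memLp_two_rpow_of_integrable_rpow_two_mul (fun _ => norm_nonneg _) hmom).integrable
      one_le_two
  calc ∫ ω, ‖htam m γ h (X ω) - h (X ω)‖ ^ 2 ∂P
      ≤ ∫ ω, ‖h (X ω) - (m / 2) • X ω‖ ^ (2 * p + 2) * γ ^ (-p) ∂P :=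
        integral_mono_of_nonneg (.of_forall fun _ => by positivity) (hG.mul_const _)
          (.of_forall fun ω => norm_htam_sub_sq_le hγ hp.le h (X ω))
    _ = (∫ ω, ‖h (X ω) - (m / 2) • X ω‖ ^ (2 * p + 2) ∂P) * γ ^ (-p) :=
        integral_mul_const _ _
    _ ≤ _ := mul_le_mul_of_nonneg_right
        (integral_rpow_le_sqrt_integral_rpow_two_mul (fun _ => norm_nonneg _) hmom)
        (by positivity)

theorem stmt_10 (d : ℕ) (hd : 1 ≤ d) (m : ℝ) (hm : 0 < m)
    (h : EuclideanSpace ℝ (Fin d) → EuclideanSpace ℝ (Fin d)) (hcont : Continuous h)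
    (p : ℝ) (hp : 0 < p)
    {Ω : Type*} [MeasurableSpace Ω] (P : Measure Ω) [IsProbabilityMeasure P]
    (X : Ω → EuclideanSpace ℝ (Fin d)) (hX : Measurable X)
    (hmom : Integrable (fun ω => ‖h (X ω) - (m / 2) • X ω‖ ^ (4 * p + 4)) P) :
    ∀ γ : ℝ, 0 < γ →
      ∫ ω, ‖htam m γ h (X ω) - h (X ω)‖ ^ 2 ∂P ≤
        (∫ ω, ‖h (X ω) - (m / 2) • X ω‖ ^ (4 * p + 4) ∂P) ^ ((1 : ℝ) / 2) * γ ^ (-p) :=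
  stmt_10_general d m h p hp P X hmom
end
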